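/- arXiv:1809.00966 — 3 statements merged into one kernel-verified Lean document; each statement's English description precedes it below -/
import Mathlib

section
/- Let f(x) = N₀(2^(x/W) − 1) with N₀, W > 0, and define y(x) = f(x) − x·f′(x) for x > 0. Then y is strictly decreasing on (0, ∞), and its inverse is given by x = (W/ln 2)·[W₀(−y/(e·N₀) − 1/e) + 1], where W₀ is the principal branch of the Lambert W function. -/
/-!
Write `c = log 2 / B`, so that `2 ^ (x / B) = exp (c x)`. Then
`-y(x) / (e N₀) - 1/e = (c x - 1) e^(c x - 1)`, i.e. the argument of `W₀` is `g (c x - 1)` for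
`g u = u e^u`. Since `g` is strictly increasing on `[-1, ∞)`, which contains `c x - 1` and all
values of `W₀`, this gives both the monotonicity of `y` and `W₀ (g (c x - 1)) = c x - 1`.
-/

open Real Set

lemma neg_inv_exp_one_le_mul_exp (u : ℝ) : -(1 / exp 1) ≤ u * exp u := by
  have hle : -u ≤ exp (-u - 1) := by linarith [add_one_le_exp (-u - 1)]
  have hmul : exp (-u - 1) * exp u = 1 / exp 1 := by
    rw [← exp_add, one_div, ← exp_neg]; ring_nf
  nlinarith [exp_pos u]

lemma strictMonoOn_mul_exp : StrictMonoOn (fun u : ℝ => u * exp u) (Ici (-1)) := by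
  apply strictMonoOn_of_deriv_pos (convex_Ici _) (by fun_prop)
  intro u hu
  rw [interior_Ici, mem_Ioi] at hu
  have hderiv : HasDerivAt (fun u : ℝ => u * exp u) (1 * exp u + u * exp u) u :=
    (hasDerivAt_id u).mul (hasDerivAt_exp u)
  rw [hderiv.deriv]
  nlinarith [exp_pos u]

lemma apply_mul_exp_eq_self {W₀ : ℝ → ℝ}
    (hW₀ : ∀ z : ℝ, -(1 / exp 1) ≤ z → W₀ z * exp (W₀ z) = z ∧ -1 ≤ W₀ z)
    {u : ℝ} (hu : -1 ≤ u) : W₀ (u * exp u) = u := by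
  obtain ⟨hinv, hge⟩ := hW₀ (u * exp u) (neg_inv_exp_one_le_mul_exp u)
  exact strictMonoOn_mul_exp.injOn hge hu hinv

lemma neg_tangent_intercept_eq_mul_exp (N₀ B x : ℝ) (hN : N₀ ≠ 0) :
    -(N₀ * ((2 : ℝ) ^ (x / B) - 1) - x * (N₀ * log 2 / B * (2 : ℝ) ^ (x / B)))
        / (exp 1 * N₀) - 1 / exp 1
      = (log 2 / B * x - 1) * exp (log 2 / B * x - 1) := by
  have hpow : (2 : ℝ) ^ (x / B) = exp (log 2 / B * x) := by
    rw [rpow_def_of_pos two_pos]; ring_nf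
  rw [hpow, exp_sub]
  field_simp
  ring

/-- With f(x) = N₀(2^(x/B) − 1) and y(x) = f(x) − x·f′(x), the function y is
strictly decreasing on (0, ∞) and its inverse is
x = (B/ln 2)·(W₀(−y/(e·N₀) − 1/e) + 1), where W₀ is the principal Lambert W
branch (W₀(z)·e^{W₀(z)} = z on [−1/e, ∞)). -/
theorem stmt_3 (N₀ B : ℝ) (hN : 0 < N₀) (hB : 0 < B)
    (W₀ : ℝ → ℝ)
    (hW₀ : ∀ z : ℝ, -(1 / Real.exp 1) ≤ z → W₀ z * Real.exp (W₀ z) = z ∧ -1 ≤ W₀ z)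
    (f f' y : ℝ → ℝ)
    (hf : ∀ x : ℝ, f x = N₀ * ((2 : ℝ) ^ (x / B) - 1))
    (hf' : ∀ x : ℝ, f' x = N₀ * Real.log 2 / B * (2 : ℝ) ^ (x / B))
    (hy : ∀ x : ℝ, y x = f x - x * f' x) :
    StrictAntiOn y (Set.Ioi 0) ∧
    (∀ x : ℝ, 0 < x →
      x = (B / Real.log 2) *
        (W₀ (-(y x) / (Real.exp 1 * N₀) - 1 / Real.exp 1) + 1)) := by
  set c := log 2 / B
  have hc : 0 < c := div_pos (log_pos one_lt_two) hB
  have harg : ∀ x, -(y x) / (exp 1 * N₀) - 1 / exp 1 = (c * x - 1) * exp (c * x - 1) := by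
    intro x
    rw [hy, hf, hf']
    exact neg_tangent_intercept_eq_mul_exp N₀ B x hN.ne'
  have hshift : ∀ x ∈ Ioi (0 : ℝ), c * x - 1 ∈ Ici (-1) := fun x hx => by
    have := mul_pos hc hx
    simp only [mem_Ici]; linarith
  refine ⟨fun a ha b hb hab => ?_, fun x hx => ?_⟩
  · have hlt := strictMonoOn_mul_exp (hshift a ha) (hshift b hb) (by gcongr)
    simp only [← harg] at hlt
    have hden : 0 < exp 1 * N₀ := mul_pos (exp_pos 1) hN
    rw [sub_lt_sub_iff_right, div_lt_div_iff_of_pos_right hden] at hlt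
    linarith
  · rw [harg, apply_mul_exp_eq_self hW₀ (hshift x hx), sub_add_cancel, ← mul_assoc, div_mul_div_cancel₀ (log_pos one_lt_two).ne', div_self hB.ne',
      one_mul]
end

section
/- For constants β > 0, h > 0, N₀ > 0, W > 0, the unique stationary point in r > 0 of the per-bit cost φ(r) = f(r)/(r·h²) + β/r, where f(r) = N₀(2^(r/W) − 1), satisfies f(r) − r·f′(r) = −β·h², and equivalently r = (W/ln 2)·[W₀((β h²/N₀ − 1)/e) + 1], provided β h²/N₀ − 1 ≥ −1 so that the Lambert W argument is in the domain of W₀. -/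
lemma wexp_smon : StrictMonoOn (fun w : ℝ => w * Real.exp w) (Set.Ici (-1)) := by
  apply strictMonoOn_of_deriv_pos (convex_Ici _)
  · exact (continuous_id.mul Real.continuous_exp).continuousOn
  · intro x hx
    rw [interior_Ici, Set.mem_Ioi] at hx
    have hd : HasDerivAt (fun w : ℝ => w * Real.exp w)
        (1 * Real.exp x + x * Real.exp x) x :=
      (hasDerivAt_id x).mul (Real.hasDerivAt_exp x)
    rw [hd.deriv]
    have : 0 < (1 + x) * Real.exp x := mul_pos (by linarith) (Real.exp_pos x)
    nlinarith [Real.exp_pos x]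

/-- The unique stationary point r > 0 of the per-bit cost
φ(r) = f(r)/(r·h²) + β/r, with f(r) = N₀(2^(r/B) − 1), satisfies
f(r) − r·f′(r) = −β·h², and equals r* = (B/ln 2)·(W₀((βh²/N₀ − 1)/e) + 1),
provided (βh²/N₀ − 1)/e ≥ −1/e (the Lambert W₀ domain). -/
theorem stmt_4 (β h N₀ B : ℝ) (hβ : 0 < β) (hh : 0 < h) (hN : 0 < N₀) (hB : 0 < B)
    (W₀ : ℝ → ℝ)
    (hW₀ : ∀ z : ℝ, -(1 / Real.exp 1) ≤ z → W₀ z * Real.exp (W₀ z) = z ∧ -1 ≤ W₀ z)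
    (hdom : -(1 / Real.exp 1) ≤ (β * h ^ 2 / N₀ - 1) / Real.exp 1)
    (f f' φ : ℝ → ℝ)
    (hf : ∀ x : ℝ, f x = N₀ * ((2 : ℝ) ^ (x / B) - 1))
    (hf' : ∀ x : ℝ, f' x = N₀ * Real.log 2 / B * (2 : ℝ) ^ (x / B))
    (hφ : ∀ r : ℝ, φ r = f r / (r * h ^ 2) + β / r) :
    (0 : ℝ) < (B / Real.log 2) * (W₀ ((β * h ^ 2 / N₀ - 1) / Real.exp 1) + 1) ∧
    (∀ r : ℝ, 0 < r →
      (deriv φ r = 0 ↔ f r - r * f' r = -(β * h ^ 2))) ∧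
    (∀ r : ℝ, 0 < r →
      (f r - r * f' r = -(β * h ^ 2) ↔
        r = (B / Real.log 2) * (W₀ ((β * h ^ 2 / N₀ - 1) / Real.exp 1) + 1))) := by
  set z : ℝ := (β * h ^ 2 / N₀ - 1) / Real.exp 1 with hzdef
  have he : (0:ℝ) < Real.exp 1 := Real.exp_pos 1
  have hl2 : (0:ℝ) < Real.log 2 := Real.log_pos one_lt_two
  obtain ⟨hWz, hWz1⟩ := hW₀ z hdom
  have hzgt : -(1 / Real.exp 1) < z := by
    have hpos : 0 < β * h ^ 2 / N₀ := by positivity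
    rw [hzdef, show -(1 / Real.exp 1) = (-1) / Real.exp 1 by ring]
    gcongr
    linarith
  have hWgt : -1 < W₀ z := by
    rcases lt_or_eq_of_le hWz1 with hlt | heq
    · exact hlt
    · exfalso
      rw [← heq, Real.exp_neg] at hWz
      rw [one_div] at hzgt
      linarith
  -- Part 1
  refine ⟨mul_pos (by positivity) (by linarith), ?_, ?_⟩
  · -- Part 2 : derivative characterization
    intro r hr
    have hrne : r ≠ 0 := hr.ne'
    have hF : HasDerivAt f (f' r) r := by
      have h1 : HasDerivAt (fun x : ℝ => x / B) (1 / B) r := (hasDerivAt_id r).div_const B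
      have h2 : HasDerivAt (fun y : ℝ => (2:ℝ) ^ y)
          ((2:ℝ) ^ (r / B) * Real.log 2) (r / B) :=
        (Real.hasStrictDerivAt_const_rpow two_pos (r / B)).hasDerivAt
      have h3 := h2.comp r h1
      have h4 : HasDerivAt (fun x : ℝ => N₀ * ((2:ℝ) ^ (x / B) - 1))
          (N₀ * ((2:ℝ) ^ (r / B) * Real.log 2 * (1 / B))) r := (h3.sub_const 1).const_mul N₀
      have hfeq : f = fun x : ℝ => N₀ * ((2:ℝ) ^ (x / B) - 1) := funext hf
      rw [hfeq, hf']
      convert h4 using 1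
      ring
    have hφeq : φ = fun x : ℝ => f x / (x * h ^ 2) + β / x := funext hφ
    have hden : r * h ^ 2 ≠ 0 := by positivity
    have hQ : HasDerivAt (fun x : ℝ => f x / (x * h ^ 2))
        ((f' r * (r * h ^ 2) - f r * (1 * h ^ 2)) / (r * h ^ 2) ^ 2) r :=
      hF.div ((hasDerivAt_id r).mul_const (h ^ 2)) hden
    have hR : HasDerivAt (fun x : ℝ => β / x) (β * (-(r ^ 2)⁻¹)) r := by
      have := (hasDerivAt_inv hrne).const_mul β
      simpa [div_eq_mul_inv] using this
    have hD : HasDerivAt φ ((r * f' r - f r - β * h ^ 2) / (r ^ 2 * h ^ 2)) r := by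
      rw [hφeq]
      refine (hQ.add hR).congr_deriv ?_
      field_simp [hh.ne']
      ring
    rw [hD.deriv, div_eq_zero_iff]
    constructor
    · rintro (h1 | h1)
      · linarith
      · exfalso; revert h1; positivity
    · intro h1; left; linarith
  · -- Part 3 : Lambert W characterization
    intro r hr
    set u : ℝ := r * Real.log 2 / B with hu
    have hrpow : (2:ℝ) ^ (r / B) = Real.exp u := by
      rw [Real.rpow_def_of_pos two_pos, hu]; ring_nf
    have hupos : 0 < u := by positivity
    have hru : r * (N₀ * Real.log 2 / B) = N₀ * u := by rw [hu]; field_simp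
    have step1 : f r - r * f' r = -(β * h ^ 2) ↔
        (u - 1) * Real.exp (u - 1) = z := by
      rw [hf, hf', hrpow, hzdef, eq_div_iff he.ne', mul_assoc, ← Real.exp_add,
        sub_add_cancel]
      rw [show β * h ^ 2 / N₀ - 1 = (β * h ^ 2 - N₀) / N₀ by field_simp,
        eq_div_iff hN.ne']
      constructor
      · intro H
        linear_combination -H - Real.exp u * hru
      · intro H
        linear_combination -H - Real.exp u * hru
    have step2 : (u - 1) * Real.exp (u - 1) = z ↔ u - 1 = W₀ z := by
      constructor
      · intro H
        exact wexp_smon.injOn (Set.mem_Ici.mpr (by linarith)) (Set.mem_Ici.mpr hWz1)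
          (by simpa using H.trans hWz.symm)
      · intro H; rw [H]; exact hWz
    have step3 : u - 1 = W₀ z ↔
        r = (B / Real.log 2) * (W₀ z + 1) := by
      rw [hu]
      constructor
      · intro H; field_simp at H ⊢; linarith
      · intro H; rw [H]; field_simp; ring
    rw [step1, step2, step3]
end

section
/- Let f(x) = N₀(2^{x/W} − 1) with N₀, W > 0. For any r > 0 and D ≥ 0, the energy (D/r)·f(r)/h² of transmitting D bits at constant rate r equals t·f(D/t)/h² with t = D/r, and for fixed total time budget shared between two data chunks D₁ and D₂ transmitted at rates r₁ and r₂ over the same channel, the total energy D₁f(r₁)/(r₁h²) + D₂f(r₂)/(r₂h²) subject to D₁/r₁ + D₂/r₂ = t₀ (fixed) and transmitting D₁ + D₂ bits total is minimized when r₁ = r₂. -/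
/-!
Let `tᵢ = Dᵢ / rᵢ` be the time spent on chunk `i`. Its energy is `tᵢ f(rᵢ) / h²`, and the common
rate `R = (D₁ + D₂) / t₀` is the `tᵢ`-weighted mean of `r₁, r₂`, because `t₁ + t₂ = t₀`. Since
`f` is an affine image of an exponential, it is convex, so Jensen's inequality with weights
`tᵢ / t₀` gives `t₀ f(R) ≤ t₁ f(r₁) + t₂ f(r₂)`.
-/

open Set

theorem ConvexOn.perspective_add_le {E : Type*} [AddCommGroup E] [Module ℝ E] {s : Set E}
    {g : E → ℝ} (hg : ConvexOn ℝ s g) {t₁ t₂ : ℝ} (ht₁ : 0 ≤ t₁) (ht₂ : 0 ≤ t₂)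
    (ht : 0 < t₁ + t₂) {x y : E} (hx : x ∈ s) (hy : y ∈ s) :
    (t₁ + t₂) * g ((t₁ + t₂)⁻¹ • (t₁ • x + t₂ • y)) ≤ t₁ * g x + t₂ * g y := by
  have hmean := hg.2 hx hy (div_nonneg ht₁ ht.le) (div_nonneg ht₂ ht.le)
    (by rw [← add_div, div_self ht.ne'])
  rw [smul_add, smul_smul, smul_smul, ← div_eq_inv_mul, ← div_eq_inv_mul]
  calc (t₁ + t₂) * g ((t₁ / (t₁ + t₂)) • x + (t₂ / (t₁ + t₂)) • y)
      ≤ (t₁ + t₂) * ((t₁ / (t₁ + t₂)) • g x + (t₂ / (t₁ + t₂)) • g y) :=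
        mul_le_mul_of_nonneg_left hmean ht.le
    _ = t₁ * g x + t₂ * g y := by simp only [smul_eq_mul]; field_simp

theorem convexOn_mul_two_rpow_div_sub_one {N₀ : ℝ} (hN : 0 ≤ N₀) (B : ℝ) :
    ConvexOn ℝ univ fun x : ℝ => N₀ * ((2 : ℝ) ^ (x / B) - 1) := by
  have hpow : ConvexOn ℝ univ fun x : ℝ => (2 : ℝ) ^ (x / B) := by
    convert! (convexOn_rpow_left two_pos).comp_linearMap (LinearMap.mul ℝ ℝ B⁻¹) using 1
    ext x
    simp [div_eq_inv_mul]
  convert! (hpow.add_const (-1)).smul hN using 1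

theorem stmt_8_general (N₀ B h : ℝ) (hN : 0 < N₀)
    (f : ℝ → ℝ) (hf : ∀ x : ℝ, f x = N₀ * ((2 : ℝ) ^ (x / B) - 1)) :
    (∀ D r : ℝ, 0 ≤ D → 0 < r →
      (D / r) * f r / h ^ 2 = (D / r) * f (D / (D / r)) / h ^ 2) ∧
    (∀ D₁ D₂ t₀ r₁ r₂ : ℝ, 0 < D₁ → 0 < D₂ → 0 < t₀ → 0 < r₁ → 0 < r₂ →
      D₁ / r₁ + D₂ / r₂ = t₀ →
      D₁ * f ((D₁ + D₂) / t₀) / (((D₁ + D₂) / t₀) * h ^ 2) +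
        D₂ * f ((D₁ + D₂) / t₀) / (((D₁ + D₂) / t₀) * h ^ 2) ≤
      D₁ * f r₁ / (r₁ * h ^ 2) + D₂ * f r₂ / (r₂ * h ^ 2)) := by
  refine ⟨fun D r _ _ => ?_, fun D₁ D₂ t₀ r₁ r₂ hD₁ hD₂ ht₀ hr₁ hr₂ htime => ?_⟩
  · rcases eq_or_ne D 0 with rfl | hD
    · simp
    · rw [div_div_cancel₀ hD]
  have hmean : (D₁ + D₂) / t₀ =
      (D₁ / r₁ + D₂ / r₂)⁻¹ • ((D₁ / r₁) • r₁ + (D₂ / r₂) • r₂) := by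
    rw [smul_eq_mul, smul_eq_mul, smul_eq_mul, div_mul_cancel₀ _ hr₁.ne',
      div_mul_cancel₀ _ hr₂.ne', htime, div_eq_inv_mul]
  have hconv : ConvexOn ℝ univ f := by
    rw [funext hf]
    exact convexOn_mul_two_rpow_div_sub_one hN.le B
  have hjensen := hconv.perspective_add_le (div_pos hD₁ hr₁).le (div_pos hD₂ hr₂).le
    (htime ▸ ht₀) (mem_univ r₁) (mem_univ r₂)
  rw [← hmean, htime] at hjensen
  have hD : D₁ + D₂ ≠ 0 := (add_pos hD₁ hD₂).ne'
  calc D₁ * f ((D₁ + D₂) / t₀) / (((D₁ + D₂) / t₀) * h ^ 2) +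
        D₂ * f ((D₁ + D₂) / t₀) / (((D₁ + D₂) / t₀) * h ^ 2)
      = t₀ * f ((D₁ + D₂) / t₀) / h ^ 2 := by field_simp
    _ ≤ (D₁ / r₁ * f r₁ + D₂ / r₂ * f r₂) / h ^ 2 :=
        div_le_div_of_nonneg_right hjensen (sq_nonneg h)
    _ = D₁ * f r₁ / (r₁ * h ^ 2) + D₂ * f r₂ / (r₂ * h ^ 2) := by ring

/-- With f(x) = N₀(2^{x/B} − 1): (i) the energy (D/r)·f(r)/h² of sending D bits
at rate r equals t·f(D/t)/h² with t = D/r; (ii) for two chunks D₁, D₂ sent at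
rates r₁, r₂ over the same channel under a total time budget
D₁/r₁ + D₂/r₂ = t₀, the total energy is minimized when r₁ = r₂
(= (D₁+D₂)/t₀). -/
theorem stmt_8 (N₀ B h : ℝ) (hN : 0 < N₀) (hB : 0 < B) (hh : 0 < h)
    (f : ℝ → ℝ) (hf : ∀ x : ℝ, f x = N₀ * ((2 : ℝ) ^ (x / B) - 1)) :
    (∀ D r : ℝ, 0 ≤ D → 0 < r →
      (D / r) * f r / h ^ 2 = (D / r) * f (D / (D / r)) / h ^ 2) ∧
    (∀ D₁ D₂ t₀ r₁ r₂ : ℝ, 0 < D₁ → 0 < D₂ → 0 < t₀ → 0 < r₁ → 0 < r₂ →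
      D₁ / r₁ + D₂ / r₂ = t₀ →
      D₁ * f ((D₁ + D₂) / t₀) / (((D₁ + D₂) / t₀) * h ^ 2) +
        D₂ * f ((D₁ + D₂) / t₀) / (((D₁ + D₂) / t₀) * h ^ 2) ≤
      D₁ * f r₁ / (r₁ * h ^ 2) + D₂ * f r₂ / (r₂ * h ^ 2)) :=
  stmt_8_general N₀ B h hN f hf
end
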